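/- Let d, k, n ≥ 1 be integers, let μ₊ and μ₋ be finite measures on ℝ^d × ℝ, each supported in {(w, b) : ‖w‖₂ = 1 and |b| ≤ √d}, with V := μ₊(ℝ^d × ℝ) + μ₋(ℝ^d × ℝ), and let f : ℝ^d → ℝ be measurable with f(x) = ∫ σ_k(w·x + b) dμ₊(w, b) − ∫ σ_k(w·x + b) dμ₋(w, b) for every x ∈ Ω. Then there exist a : Fin n → ℝ, w : Fin n → ℝ^d and b : Fin n → ℝ with ‖wᵢ‖₂ = 1 and |bᵢ| ≤ √d for all i, Σ_{i=1}^{n} |aᵢ| ≤ V, and ∫_Ω ( f(x) − Σ_{i=1}^{n} aᵢ σ_k(wᵢ·x + bᵢ) )² dx ≤ 4^k · d^k · V² / n. -/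

import Mathlib

open MeasureTheory
open scoped RealInnerProductSpace

/-- The unit cube `Ω = [0,1]^d` in `ℝ^d`. -/
def unitCube (d : ℕ) : Set (EuclideanSpace ℝ (Fin d)) :=
  {x | ∀ i, x i ∈ Set.Icc (0 : ℝ) 1}

/-- Second moment of an i.i.d. centered sum under a product probability measure. -/
lemma sum_centered_sq_integral {α : Type*} [MeasurableSpace α] (P : Measure α)
    [IsProbabilityMeasure P] (n : ℕ) (ψ : α → ℝ) (hm : Measurable ψ) (C : ℝ)
    (hb : ∀ z, |ψ z| ≤ C) (h0 : ∫ z, ψ z ∂P = 0) :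
    ∫ ω : Fin n → α, (∑ i, ψ (ω i)) ^ 2 ∂(Measure.pi fun _ => P) =
      n * ∫ z, ψ z ^ 2 ∂P := by
  letI : MeasureSpace α := ⟨P⟩
  haveI : IsProbabilityMeasure (volume : Measure α) := inferInstanceAs (IsProbabilityMeasure P)
  have hvol : (Measure.pi fun _ : Fin n => P) = (volume : Measure (Fin n → α)) :=
    volume_pi.symm
  haveI : IsProbabilityMeasure (volume : Measure (Fin n → α)) := by
    rw [← hvol]; infer_instance
  haveI : Nonempty α := by
    rcases isEmpty_or_nonempty α with h | h
    · exfalso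
      have h1 := measure_univ (μ := P)
      rw [Set.univ_eq_empty_iff.2 h, measure_empty] at h1
      exact zero_ne_one h1
    · exact h
  have hC0 : 0 ≤ C := le_trans (abs_nonneg _) (hb Classical.ofNonempty)
  -- integrability of pairwise products
  have hint : ∀ i j : Fin n, Integrable (fun ω : Fin n → α => ψ (ω i) * ψ (ω j)) volume := by
    intro i j
    refine (integrable_const (C^2)).mono' ?_ (ae_of_all _ fun ω => ?_)
    · exact ((hm.comp (measurable_pi_apply i)).mul (hm.comp (measurable_pi_apply j))).aestronglyMeasurable
    · rw [Real.norm_eq_abs, abs_mul, sq]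
      exact mul_le_mul (hb _) (hb _) (abs_nonneg _) hC0
  have key : ∀ i j : Fin n, (∫ ω : Fin n → α, ψ (ω i) * ψ (ω j)) =
      if i = j then ∫ z, ψ z ^ 2 ∂P else 0 := by
    intro i j
    have hprod : ∀ ω : Fin n → α, ψ (ω i) * ψ (ω j) =
        ∏ l, ((if l = i then ψ (ω l) else 1) * (if l = j then ψ (ω l) else 1)) := by
      intro ω
      rw [Finset.prod_mul_distrib, Finset.prod_ite_eq', Finset.prod_ite_eq']
      simp
    simp_rw [hprod]
    rw [volume_pi, MeasureTheory.integral_fintype_prod_eq_prod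
      (f := fun l z => (if l = i then ψ z else 1) * (if l = j then ψ z else 1))]
    by_cases hij : i = j
    · subst hij
      simp only [if_pos rfl]
      rw [Finset.prod_eq_single i]
      · show (∫ z, (if i = i then ψ z else 1) * (if i = i then ψ z else 1) ∂P) = _
        simp [← sq]
      · intro l _ hl
        simp [if_neg hl]
      · simp
    · rw [if_neg hij, Finset.prod_eq_zero (Finset.mem_univ i)]
      show (∫ z, (if i = i then ψ z else 1) * (if i = j then ψ z else 1) ∂P) = 0
      simp [hij, h0]
  calc ∫ ω : Fin n → α, (∑ i, ψ (ω i)) ^ 2 ∂(Measure.pi fun _ : Fin n => P)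
      = ∫ ω : Fin n → α, ∑ i, ∑ j, ψ (ω i) * ψ (ω j) := by
        rw [hvol]; congr 1; ext ω; rw [sq, Finset.sum_mul_sum]
    _ = ∑ i, ∑ j, ∫ ω : Fin n → α, ψ (ω i) * ψ (ω j) := by
        rw [integral_finset_sum _ fun i _ => integrable_finset_sum _ fun j _ => hint i j]
        exact Finset.sum_congr rfl fun i _ => integral_finset_sum _ fun j _ => hint i j
    _ = ∑ i : Fin n, ∫ z, ψ z ^ 2 ∂P := by
        simp_rw [key]; simp
    _ = n * ∫ z, ψ z ^ 2 ∂P := by simp [Finset.sum_const, nsmul_eq_mul]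

lemma unitCube_eq_preimage (d : ℕ) :
    unitCube d = (MeasurableEquiv.toLp 2 (Fin d → ℝ)).symm ⁻¹'
      (Set.univ.pi fun _ : Fin d => Set.Icc (0 : ℝ) 1) := by
  ext x
  simp only [unitCube, Set.mem_setOf_eq, Set.mem_preimage, Set.mem_pi, Set.mem_univ,
    true_implies]
  exact Iff.rfl

lemma measurableSet_unitCube (d : ℕ) : MeasurableSet (unitCube d) := by
  rw [unitCube_eq_preimage]
  exact (MeasurableEquiv.toLp 2 (Fin d → ℝ)).symm.measurable
    (MeasurableSet.univ_pi fun _ => measurableSet_Icc)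

lemma volume_unitCube (d : ℕ) : volume (unitCube d) = 1 := by
  rw [unitCube_eq_preimage]
  rw [(EuclideanSpace.volume_preserving_symm_measurableEquiv_toLp (Fin d)).measure_preimage
    ((MeasurableSet.univ_pi fun _ => measurableSet_Icc).nullMeasurableSet)]
  rw [volume_pi_pi]
  simp [Real.volume_Icc]

lemma norm_le_sqrt_of_mem_unitCube {d : ℕ} {x : EuclideanSpace ℝ (Fin d)}
    (hx : x ∈ unitCube d) : ‖x‖ ≤ Real.sqrt d := by
  rw [EuclideanSpace.norm_eq]
  apply Real.sqrt_le_sqrt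
  calc ∑ i, ‖x i‖ ^ 2 ≤ ∑ _i : Fin d, (1 : ℝ) := by
        refine Finset.sum_le_sum fun i _ => ?_
        have h := hx i
        have : ‖x i‖ ≤ 1 := by
          rw [Real.norm_eq_abs, abs_le]
          exact ⟨le_trans (by norm_num) h.1, h.2⟩
        calc ‖x i‖ ^ 2 ≤ 1 ^ 2 := pow_le_pow_left₀ (norm_nonneg _) this 2
          _ = 1 := one_pow 2
    _ = d := by simp

namespace VarAux

/-- RePU ridge function. -/
noncomputable def σf {d : ℕ} (k : ℕ) (p : EuclideanSpace ℝ (Fin d) × ℝ) (x : EuclideanSpace ℝ (Fin d)) : ℝ :=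
  (max 0 (⟪p.1, x⟫ + p.2)) ^ k

/-- Clamped sign. -/
def sgn (t : ℝ) : ℝ := min 1 (max (-1) t)

/-- Truncated signed kernel. -/
noncomputable def Hf {d : ℕ} (k : ℕ) (M : ℝ) (z : (EuclideanSpace ℝ (Fin d) × ℝ) × ℝ)
    (x : EuclideanSpace ℝ (Fin d)) : ℝ := sgn z.2 * min M (σf k z.1 x)

lemma abs_sgn_le (t : ℝ) : |sgn t| ≤ 1 := by
  rw [abs_le]
  exact ⟨le_min (by norm_num) (le_max_left _ _), min_le_left _ _⟩

lemma sgn_eq (t : ℝ) (h : |t| = 1) : sgn t = t := by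
  rcases (abs_eq (by norm_num : (0:ℝ) ≤ 1)).1 h with h1 | h1 <;> subst h1 <;>
    simp [sgn] <;> norm_num

lemma σf_nonneg {d : ℕ} (k : ℕ) (p : EuclideanSpace ℝ (Fin d) × ℝ)
    (x : EuclideanSpace ℝ (Fin d)) : 0 ≤ σf k p x :=
  pow_nonneg (le_max_left _ _) _

lemma abs_Hf_le {d : ℕ} (k : ℕ) {M : ℝ} (hM : 0 ≤ M)
    (z : (EuclideanSpace ℝ (Fin d) × ℝ) × ℝ) (x : EuclideanSpace ℝ (Fin d)) :
    |Hf k M z x| ≤ M := by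
  rw [Hf, abs_mul]
  have h1 : |min M (σf k z.1 x)| ≤ M := by
    rw [abs_of_nonneg (le_min hM (σf_nonneg k z.1 x))]
    exact min_le_left _ _
  calc |sgn z.2| * |min M (σf k z.1 x)| ≤ 1 * M :=
        mul_le_mul (abs_sgn_le _) h1 (abs_nonneg _) (by norm_num)
    _ = M := one_mul M

lemma Hf_continuous {d : ℕ} (k : ℕ) (M : ℝ) :
    Continuous (fun q : (((EuclideanSpace ℝ (Fin d) × ℝ) × ℝ) × EuclideanSpace ℝ (Fin d)) =>
      Hf k M q.1 q.2) := by
  have hinner : Continuous (fun q : (((EuclideanSpace ℝ (Fin d) × ℝ) × ℝ) ×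
      EuclideanSpace ℝ (Fin d)) => (⟪q.1.1.1, q.2⟫ : ℝ)) :=
    continuous_inner.comp ((continuous_fst.comp (continuous_fst.comp continuous_fst)).prodMk
      continuous_snd)
  exact (continuous_const.min (continuous_const.max
      (continuous_snd.comp continuous_fst))).mul
    (continuous_const.min ((continuous_const.max (hinner.add
      (continuous_snd.comp (continuous_fst.comp continuous_fst)))).pow k))

lemma Hf_measurable {d : ℕ} (k : ℕ) (M : ℝ) (x : EuclideanSpace ℝ (Fin d)) :
    Measurable (fun z : ((EuclideanSpace ℝ (Fin d) × ℝ) × ℝ) => Hf k M z x) :=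
  (Hf_continuous k M).measurable.comp (measurable_id.prodMk measurable_const)

/-- The truncation is inactive on the relevant support. -/
lemma min_σf_eq {d k : ℕ} {p : EuclideanSpace ℝ (Fin d) × ℝ} (h1 : ‖p.1‖ = 1)
    (h2 : |p.2| ≤ Real.sqrt d) {x : EuclideanSpace ℝ (Fin d)} (hx : x ∈ unitCube d) :
    min ((2 * Real.sqrt d) ^ k) (σf k p x) = σf k p x := by
  refine min_eq_right ?_
  rw [σf]
  refine pow_le_pow_left₀ (le_max_left _ _) ?_ k
  refine max_le (by positivity) ?_
  have hi := abs_real_inner_le_norm p.1 x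
  have hxn := norm_le_sqrt_of_mem_unitCube hx
  calc ⟪p.1, x⟫ + p.2 ≤ |⟪p.1, x⟫| + |p.2| := add_le_add (le_abs_self _) (le_abs_self _)
    _ ≤ ‖p.1‖ * ‖x‖ + Real.sqrt d := add_le_add hi h2
    _ = ‖x‖ + Real.sqrt d := by rw [h1, one_mul]
    _ ≤ 2 * Real.sqrt d := by linarith

lemma abs_sub_le' (a b : ℝ) : |a - b| ≤ |a| + |b| := abs_sub a b


/-- On the support set the truncated kernel agrees with the signed ridge function. -/
lemma Hf_eq {d k : ℕ} (z : (EuclideanSpace ℝ (Fin d) × ℝ) × ℝ)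
    (h1 : ‖z.1.1‖ = 1) (h2 : |z.1.2| ≤ Real.sqrt d) (h3 : |z.2| = 1)
    {x : EuclideanSpace ℝ (Fin d)} (hx : x ∈ unitCube d) :
    Hf k ((2 * Real.sqrt d) ^ k) z x = z.2 * (max 0 (⟪z.1.1, x⟫ + z.1.2)) ^ k := by
  unfold Hf
  rw [sgn_eq _ h3, min_σf_eq h1 h2 hx]
  rfl

end VarAux

set_option maxHeartbeats 4000000

/-- Monte-Carlo approximation in variation spaces: if `f` has the variation-space
representation with total mass `V`, then there is an `n`-neuron RePU network
`Σ aᵢ σ_k(wᵢ·x + bᵢ)` with `‖wᵢ‖₂ = 1`, `|bᵢ| ≤ √d`, `Σ |aᵢ| ≤ V`, and `L²(Ω)`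
error to `f` at most `4^k d^k V²/n`. -/
theorem variation_finite_network_approx (d k n : ℕ) (hd : 1 ≤ d) (hk : 1 ≤ k) (hn : 1 ≤ n)
    (μp μm : Measure (EuclideanSpace ℝ (Fin d) × ℝ))
    [IsFiniteMeasure μp] [IsFiniteMeasure μm]
    (hsuppp : ∀ᵐ p ∂μp, ‖p.1‖ = 1 ∧ |p.2| ≤ Real.sqrt d)
    (hsuppm : ∀ᵐ p ∂μm, ‖p.1‖ = 1 ∧ |p.2| ≤ Real.sqrt d)
    (V : ℝ) (hV : V = (μp Set.univ).toReal + (μm Set.univ).toReal)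
    (f : EuclideanSpace ℝ (Fin d) → ℝ) (hf : Measurable f)
    (hrepr : ∀ x ∈ unitCube d,
      f x = (∫ p, (max 0 (⟪p.1, x⟫ + p.2)) ^ k ∂μp) -
        ∫ p, (max 0 (⟪p.1, x⟫ + p.2)) ^ k ∂μm) :
    ∃ (a : Fin n → ℝ) (w : Fin n → EuclideanSpace ℝ (Fin d)) (b : Fin n → ℝ),
      (∀ i, ‖w i‖ = 1 ∧ |b i| ≤ Real.sqrt d) ∧
      (∑ i, |a i|) ≤ V ∧
      ∫ x in unitCube d, (f x - ∑ i, a i * (max 0 (⟪w i, x⟫ + b i)) ^ k) ^ 2 ≤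
        (4 : ℝ) ^ k * (d : ℝ) ^ k * V ^ 2 / n := by
  classical
  have hΩm : MeasurableSet (unitCube d) := measurableSet_unitCube d
  have hΩv : volume (unitCube d) = 1 := volume_unitCube d
  have hsd : (0:ℝ) ≤ Real.sqrt d := Real.sqrt_nonneg _
  have hnpos : (0:ℝ) < n := by exact_mod_cast hn
  have hnne : (n:ℝ) ≠ 0 := ne_of_gt hnpos
  set M : ℝ := (2 * Real.sqrt d) ^ k with hMdef
  have hM0 : 0 ≤ M := by rw [hMdef]; positivity
  have hV0 : 0 ≤ V := by rw [hV]; positivity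
  set H := fun (z : (EuclideanSpace ℝ (Fin d) × ℝ) × ℝ) (x : EuclideanSpace ℝ (Fin d)) =>
    VarAux.Hf k M z x with hHdef
  have hHbdd : ∀ z x, |H z x| ≤ M := fun z x => VarAux.abs_Hf_le k hM0 z x
  have hHx : ∀ x, Measurable fun z => H z x := fun x => VarAux.Hf_measurable k M x
  have hmap1 : Measurable (fun p : EuclideanSpace ℝ (Fin d) × ℝ => (p, (1:ℝ))) :=
    measurable_id.prodMk measurable_const
  have hmap2 : Measurable (fun p : EuclideanSpace ℝ (Fin d) × ℝ => (p, (-1:ℝ))) :=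
    measurable_id.prodMk measurable_const
  set μ : Measure ((EuclideanSpace ℝ (Fin d) × ℝ) × ℝ) :=
    μp.map (fun p => (p, (1:ℝ))) + μm.map (fun p => (p, (-1:ℝ))) with hμdef
  haveI h1fin : IsFiniteMeasure (μp.map (fun p => (p, (1:ℝ)))) := ⟨by
    rw [Measure.map_apply hmap1 MeasurableSet.univ, Set.preimage_univ]
    exact measure_lt_top μp _⟩
  haveI h2fin : IsFiniteMeasure (μm.map (fun p => (p, (-1:ℝ)))) := ⟨by
    rw [Measure.map_apply hmap2 MeasurableSet.univ, Set.preimage_univ]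
    exact measure_lt_top μm _⟩
  haveI hμfin : IsFiniteMeasure μ := by rw [hμdef]; infer_instance
  have hμuniv : μ Set.univ = μp Set.univ + μm Set.univ := by
    rw [hμdef, Measure.add_apply, Measure.map_apply hmap1 MeasurableSet.univ,
      Measure.map_apply hmap2 MeasurableSet.univ, Set.preimage_univ, Set.preimage_univ]
  have hμV : V = (μ Set.univ).toReal := by
    rw [hμuniv, ENNReal.toReal_add (measure_ne_top _ _) (measure_ne_top _ _), hV]
  have hbint : ∀ (ν : Measure ((EuclideanSpace ℝ (Fin d) × ℝ) × ℝ)), IsFiniteMeasure ν →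
      ∀ x, Integrable (fun z => H z x) ν := by
    intro ν hν x
    haveI := hν
    exact (integrable_const M).mono' (hHx x).aestronglyMeasurable
      (ae_of_all _ fun z => by simpa [Real.norm_eq_abs] using hHbdd z x)
  have hfa : ∀ x ∈ unitCube d, f x = ∫ z, H z x ∂μ := by
    intro x hx
    have h1 : (∫ z, H z x ∂(μp.map (fun p => (p, (1:ℝ))))) =
        ∫ p, (max 0 (⟪p.1, x⟫ + p.2)) ^ k ∂μp := by
      rw [integral_map hmap1.aemeasurable (hHx x).aestronglyMeasurable]
      refine integral_congr_ae ?_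
      filter_upwards [hsuppp] with p hp
      show VarAux.Hf k M (p, 1) x = _
      rw [hMdef, VarAux.Hf_eq (p, 1) hp.1 hp.2 (by norm_num) hx]
      simp
    have h2 : (∫ z, H z x ∂(μm.map (fun p => (p, (-1:ℝ))))) =
        - ∫ p, (max 0 (⟪p.1, x⟫ + p.2)) ^ k ∂μm := by
      rw [integral_map hmap2.aemeasurable (hHx x).aestronglyMeasurable, ← integral_neg]
      refine integral_congr_ae ?_
      filter_upwards [hsuppm] with p hp
      show VarAux.Hf k M (p, -1) x = _
      rw [hMdef, VarAux.Hf_eq (p, -1) hp.1 hp.2 (by norm_num) hx]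
      simp
    rw [hμdef, integral_add_measure (hbint _ h1fin x) (hbint _ h2fin x), h1, h2, hrepr x hx]
    ring
  by_cases hT : μ Set.univ = 0
  · -- degenerate case: everything is zero
    rw [hμuniv] at hT
    have hp0 : μp Set.univ = 0 := (add_eq_zero.1 hT).1
    have hm0 : μm Set.univ = 0 := (add_eq_zero.1 hT).2
    have hμp0 : μp = 0 := Measure.measure_univ_eq_zero.1 hp0
    have hμm0 : μm = 0 := Measure.measure_univ_eq_zero.1 hm0
    have hVz : V = 0 := by rw [hV, hp0, hm0]; simp
    refine ⟨fun _ => 0, fun _ => EuclideanSpace.single (⟨0, hd⟩ : Fin d) (1:ℝ), fun _ => 0,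
      fun i => ⟨by simp [EuclideanSpace.norm_single], by simpa using hsd⟩, by simpa using hV0, ?_⟩
    have hz : Set.EqOn
        (fun x => (f x - ∑ i : Fin n, (0:ℝ) *
          (max 0 (⟪EuclideanSpace.single (⟨0, hd⟩ : Fin d) (1:ℝ), x⟫ + 0)) ^ k) ^ 2)
        (fun _ => (0:ℝ)) (unitCube d) := by
      intro x hx
      simp only
      rw [hrepr x hx, hμp0, hμm0]
      simp
    rw [setIntegral_congr_fun hΩm hz, hVz]
    simp
  · -- main case
    have hTtop : μ Set.univ ≠ ⊤ := measure_ne_top μ _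
    set P := (μ Set.univ)⁻¹ • μ with hPdef
    haveI hPprob : IsProbabilityMeasure P := ⟨by
      rw [hPdef, Measure.smul_apply, smul_eq_mul, ENNReal.inv_mul_cancel hT hTtop]⟩
    have hμP : μ = (μ Set.univ) • P := by
      rw [hPdef, smul_smul, ENNReal.mul_inv_cancel hT hTtop, one_smul]
    have hPint : ∀ x, Integrable (fun z => H z x) P := fun x => hbint P inferInstance x
    set m := fun x => V * ∫ z, H z x ∂P with hmdef
    have hfm : ∀ x ∈ unitCube d, f x = m x := by
      intro x hx
      rw [hfa x hx]
      conv_lhs => rw [hμP]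
      rw [integral_smul_measure, ← hμV]
      simp [hmdef, smul_eq_mul]
    have hintb : ∀ x, |∫ z, H z x ∂P| ≤ M := by
      intro x
      have h := norm_integral_le_of_norm_le_const (μ := P) (f := fun z => H z x) (C := M)
        (ae_of_all _ fun z => by simpa [Real.norm_eq_abs] using hHbdd z x)
      simpa [Real.norm_eq_abs, measure_univ] using h
    have hmb : ∀ x, |m x| ≤ V * M := by
      intro x
      simp only [hmdef]
      rw [abs_mul, abs_of_nonneg hV0]
      exact mul_le_mul_of_nonneg_left (hintb x) hV0
    set Q := Measure.pi (fun _ : Fin n => P) with hQdef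
    haveI hQprob : IsProbabilityMeasure Q := by rw [hQdef]; infer_instance
    set ρ := volume.restrict (unitCube d) with hρdef
    haveI hρprob : IsProbabilityMeasure ρ := ⟨by
      rw [hρdef, Measure.restrict_apply_univ, hΩv]⟩
    set F := fun (x : EuclideanSpace ℝ (Fin d)) (ω : Fin n → (EuclideanSpace ℝ (Fin d) × ℝ) × ℝ) =>
      (f x - (n:ℝ)⁻¹ * ∑ i, V * H (ω i) x) ^ 2 with hFdef
    have hFmeas : Measurable (Function.uncurry F) := by
      simp only [hFdef, hHdef, Function.uncurry]
      refine Measurable.pow_const ?_ 2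
      refine (hf.comp measurable_fst).sub ?_
      refine Measurable.const_mul ?_ _
      refine Finset.measurable_sum _ fun i _ => ?_
      have hco : Measurable fun (q : EuclideanSpace ℝ (Fin d) ×
          (Fin n → (EuclideanSpace ℝ (Fin d) × ℝ) × ℝ)) =>
          (((q.2 i, q.1)) : ((EuclideanSpace ℝ (Fin d) × ℝ) × ℝ) × EuclideanSpace ℝ (Fin d)) :=
        ((measurable_pi_apply i).comp measurable_snd).prodMk measurable_fst
      exact ((VarAux.Hf_continuous k M).measurable.comp hco).const_mul V
    have hVHb : ∀ z x, |V * H z x| ≤ V * M := by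
      intro z x
      rw [abs_mul, abs_of_nonneg hV0]
      exact mul_le_mul_of_nonneg_left (hHbdd z x) hV0
    have haeΩ : ∀ᵐ q ∂(ρ.prod Q), q.1 ∈ unitCube d := by
      rw [ae_iff]
      have hset : {q : EuclideanSpace ℝ (Fin d) × (Fin n → (EuclideanSpace ℝ (Fin d) × ℝ) × ℝ) |
          ¬ q.1 ∈ unitCube d} = (unitCube d)ᶜ ×ˢ Set.univ := by
        ext q; simp
      rw [hset, Measure.prod_prod]
      have hρc : ρ (unitCube d)ᶜ = 0 := by
        rw [hρdef, Measure.restrict_apply hΩm.compl, Set.compl_inter_self]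
        exact measure_empty
      rw [hρc, zero_mul]
    have hsumb : ∀ (ω : Fin n → (EuclideanSpace ℝ (Fin d) × ℝ) × ℝ)
        (x : EuclideanSpace ℝ (Fin d)), |(n:ℝ)⁻¹ * ∑ i, V * H (ω i) x| ≤ V * M := by
      intro ω x
      have hS1 : |∑ i, V * H (ω i) x| ≤ n * (V * M) := by
        calc |∑ i, V * H (ω i) x| ≤ ∑ i, |V * H (ω i) x| := Finset.abs_sum_le_sum_abs _ _
          _ ≤ ∑ _i : Fin n, V * M := Finset.sum_le_sum fun i _ => hVHb _ _
          _ = n * (V * M) := by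
              rw [Finset.sum_const, Finset.card_univ, Fintype.card_fin, nsmul_eq_mul]
      rw [abs_mul, abs_of_nonneg (inv_nonneg.2 hnpos.le)]
      calc (n:ℝ)⁻¹ * |∑ i, V * H (ω i) x| ≤ (n:ℝ)⁻¹ * (n * (V * M)) :=
            mul_le_mul_of_nonneg_left hS1 (inv_nonneg.2 hnpos.le)
        _ = V * M := by field_simp
    have hFbdd : ∀ᵐ q ∂(ρ.prod Q), ‖Function.uncurry F q‖ ≤ (2 * (V * M)) ^ 2 := by
      filter_upwards [haeΩ] with q hq
      have h1 : |f q.1| ≤ V * M := by rw [hfm q.1 hq]; exact hmb q.1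
      have habs : |f q.1 - (n:ℝ)⁻¹ * ∑ i, V * H (q.2 i) q.1| ≤ 2 * (V * M) := by
        calc |f q.1 - (n:ℝ)⁻¹ * ∑ i, V * H (q.2 i) q.1|
            ≤ |f q.1| + |(n:ℝ)⁻¹ * ∑ i, V * H (q.2 i) q.1| := abs_sub _ _
          _ ≤ V * M + V * M := add_le_add h1 (hsumb q.2 q.1)
          _ = 2 * (V * M) := by ring
      show ‖F q.1 q.2‖ ≤ (2 * (V * M)) ^ 2
      simp only [hFdef]
      rw [Real.norm_eq_abs, abs_pow]
      exact pow_le_pow_left₀ (abs_nonneg _) habs 2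
    have hFint : Integrable (Function.uncurry F) (ρ.prod Q) :=
      (integrable_const ((2 * (V * M)) ^ 2)).mono' hFmeas.aestronglyMeasurable hFbdd
    set err := fun ω => ∫ x, F x ω ∂ρ with herrdef
    have herrint : Integrable err Q := hFint.integral_prod_right
    have hinner : ∀ x ∈ unitCube d, (∫ ω, F x ω ∂Q) ≤ (V * M) ^ 2 / n := by
      intro x hx
      set ψ := fun z : (EuclideanSpace ℝ (Fin d) × ℝ) × ℝ => m x - V * H z x with hψdef
      have hψm : Measurable ψ := measurable_const.sub ((hHx x).const_mul V)
      have hψb : ∀ z, |ψ z| ≤ 2 * (V * M) := by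
        intro z
        calc |ψ z| ≤ |m x| + |V * H z x| := abs_sub _ _
          _ ≤ V * M + V * M := add_le_add (hmb x) (hVHb z x)
          _ = 2 * (V * M) := by ring
      have hVHint : Integrable (fun z => V * H z x) P := (hPint x).const_mul V
      have hψ0 : ∫ z, ψ z ∂P = 0 := by
        simp only [hψdef]
        rw [integral_sub (integrable_const _) hVHint, integral_const, probReal_univ,
          integral_const_mul]
        simp [hmdef]
      have hVH2int : Integrable (fun z => (V * H z x) ^ 2) P := by
        refine (integrable_const ((V * M) ^ 2)).mono'
          (((hHx x).const_mul V).pow_const 2).aestronglyMeasurable (ae_of_all _ fun z => ?_)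
        rw [Real.norm_eq_abs, abs_pow]
        exact pow_le_pow_left₀ (abs_nonneg _) (hVHb z x) 2
      have hmx : ∫ z, V * H z x ∂P = m x := by
        rw [integral_const_mul]
      have hvar : ∫ z, ψ z ^ 2 ∂P ≤ (V * M) ^ 2 := by
        have hexp : (fun z => ψ z ^ 2) =
            fun z => ((V * H z x) ^ 2 - (2 * m x) * (V * H z x) + (m x) ^ 2) := by
          funext z; simp only [hψdef]; ring
        rw [hexp, integral_add (f := fun z => (V * H z x) ^ 2 - (2 * m x) * (V * H z x))
            (g := fun _ => (m x) ^ 2) (hVH2int.sub (hVHint.const_mul _)) (integrable_const _),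
          integral_sub (f := fun z => (V * H z x) ^ 2) (g := fun z => (2 * m x) * (V * H z x))
            hVH2int (hVHint.const_mul _), integral_const_mul, hmx, integral_const, probReal_univ]
        simp only [ENNReal.toReal_one, one_smul, smul_eq_mul]
        have hb2 : ∫ z, (V * H z x) ^ 2 ∂P ≤ (V * M) ^ 2 := by
          calc ∫ z, (V * H z x) ^ 2 ∂P ≤ ∫ _z, (V * M) ^ 2 ∂P := by
                refine integral_mono hVH2int (integrable_const _) fun z => ?_
                calc (V * H z x) ^ 2 = |V * H z x| ^ 2 := (sq_abs _).symm
                  _ ≤ (V * M) ^ 2 := pow_le_pow_left₀ (abs_nonneg _) (hVHb z x) 2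
            _ = (V * M) ^ 2 := by simp [measure_univ]
        nlinarith [sq_nonneg (m x)]
      have hkey := sum_centered_sq_integral P n ψ hψm (2 * (V * M)) hψb hψ0
      have hFrw : ∀ ω, F x ω = ((n:ℝ)⁻¹) ^ 2 * (∑ i, ψ (ω i)) ^ 2 := by
        intro ω
        have hsum : ∑ i, ψ (ω i) = n * m x - ∑ i, V * H (ω i) x := by
          simp only [hψdef]
          rw [Finset.sum_sub_distrib, Finset.sum_const, Finset.card_univ, Fintype.card_fin,
            nsmul_eq_mul]
        have heq : f x - (n:ℝ)⁻¹ * ∑ i, V * H (ω i) x = (n:ℝ)⁻¹ * ∑ i, ψ (ω i) := by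
          rw [hfm x hx, hsum, mul_sub, ← mul_assoc, inv_mul_cancel₀ hnne, one_mul]
        simp only [hFdef]
        rw [heq, mul_pow]
      calc ∫ ω, F x ω ∂Q = ((n:ℝ)⁻¹) ^ 2 * ∫ ω, (∑ i, ψ (ω i)) ^ 2 ∂Q := by
            simp_rw [hFrw]; rw [integral_const_mul]
        _ = ((n:ℝ)⁻¹) ^ 2 * (n * ∫ z, ψ z ^ 2 ∂P) := by rw [hQdef, hkey]
        _ ≤ ((n:ℝ)⁻¹) ^ 2 * (n * (V * M) ^ 2) := by
            refine mul_le_mul_of_nonneg_left ?_ (by positivity)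
            exact mul_le_mul_of_nonneg_left hvar (by positivity)
        _ = (V * M) ^ 2 / n := by field_simp
    have htotal : ∫ ω, err ω ∂Q ≤ (V * M) ^ 2 / n := by
      have hswap : ∫ ω, err ω ∂Q = ∫ x, (∫ ω, F x ω ∂Q) ∂ρ :=
        (integral_integral_swap hFint).symm
      rw [hswap]
      have hIL : Integrable (fun x => ∫ ω, F x ω ∂Q) ρ := hFint.integral_prod_left
      calc ∫ x, (∫ ω, F x ω ∂Q) ∂ρ ≤ ∫ _x, ((V * M) ^ 2 / n) ∂ρ := by
            refine integral_mono_ae hIL (integrable_const _) ?_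
            have hmem : ∀ᵐ x ∂ρ, x ∈ unitCube d := by rw [hρdef]; exact ae_restrict_mem hΩm
            filter_upwards [hmem] with x hx using hinner x hx
        _ = (V * M) ^ 2 / n := by simp [measure_univ]
    set S := {z : (EuclideanSpace ℝ (Fin d) × ℝ) × ℝ |
      ‖z.1.1‖ = 1 ∧ |z.1.2| ≤ Real.sqrt d ∧ |z.2| = 1} with hSdef
    have hSm : MeasurableSet S := by
      rw [hSdef]
      have h1 : IsClosed {z : (EuclideanSpace ℝ (Fin d) × ℝ) × ℝ | ‖z.1.1‖ = 1} :=
        isClosed_eq (continuous_norm.comp (continuous_fst.comp continuous_fst)) continuous_const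
      have h2 : IsClosed {z : (EuclideanSpace ℝ (Fin d) × ℝ) × ℝ | |z.1.2| ≤ Real.sqrt d} :=
        isClosed_le (continuous_abs.comp (continuous_snd.comp continuous_fst)) continuous_const
      have h3 : IsClosed {z : (EuclideanSpace ℝ (Fin d) × ℝ) × ℝ | |z.2| = 1} :=
        isClosed_eq (continuous_abs.comp continuous_snd) continuous_const
      exact (h1.inter (h2.inter h3)).measurableSet
    have hμS : μ Sᶜ = 0 := by
      rw [hμdef, Measure.add_apply]
      have e1 : μp.map (fun p => (p, (1:ℝ))) Sᶜ = 0 := by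
        rw [Measure.map_apply hmap1 hSm.compl]
        refine measure_mono_null ?_ (ae_iff.1 hsuppp)
        intro p hp
        simp only [Set.mem_preimage, Set.mem_compl_iff, hSdef, Set.mem_setOf_eq] at hp
        simp only [Set.mem_setOf_eq]
        intro hcon
        exact hp ⟨hcon.1, hcon.2, abs_one⟩
      have e2 : μm.map (fun p => (p, (-1:ℝ))) Sᶜ = 0 := by
        rw [Measure.map_apply hmap2 hSm.compl]
        refine measure_mono_null ?_ (ae_iff.1 hsuppm)
        intro p hp
        simp only [Set.mem_preimage, Set.mem_compl_iff, hSdef, Set.mem_setOf_eq] at hp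
        simp only [Set.mem_setOf_eq]
        intro hcon
        refine hp ⟨hcon.1, hcon.2, by norm_num⟩
      rw [e1, e2, add_zero]
    have hPS1 : P S = 1 := by
      have hc : P Sᶜ = 0 := by rw [hPdef, Measure.smul_apply, hμS, smul_zero]
      have h := measure_add_measure_compl (μ := P) hSm
      rw [hc, add_zero, measure_univ] at h
      exact h
    have hQS : ∀ᵐ ω ∂Q, ∀ i, ω i ∈ S := by
      have hAm : MeasurableSet (Set.univ.pi fun _ : Fin n => S) :=
        MeasurableSet.univ_pi fun _ => hSm
      have hA : Q (Set.univ.pi fun _ : Fin n => S) = 1 := by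
        rw [hQdef, Measure.pi_pi]
        simp [hPS1]
      have hcompl : Q (Set.univ.pi fun _ : Fin n => S)ᶜ = 0 := by
        rw [measure_compl hAm (measure_ne_top _ _), hA, measure_univ, tsub_self]
      rw [ae_iff]
      refine measure_mono_null ?_ hcompl
      intro ω hω
      simp only [Set.mem_setOf_eq] at hω
      simp only [Set.mem_compl_iff, Set.mem_pi, Set.mem_univ, true_implies]
      exact hω
    have hexists : ∃ ω, (∀ i, ω i ∈ S) ∧ err ω ≤ (V * M) ^ 2 / n := by
      by_contra hcon
      push_neg at hcon
      have hstrict : ∀ᵐ ω ∂Q, 0 < err ω - (V * M) ^ 2 / n := by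
        filter_upwards [hQS] with ω hω
        have := hcon ω hω
        linarith
      have hgint : Integrable (fun ω => err ω - (V * M) ^ 2 / n) Q :=
        herrint.sub (integrable_const _)
      have hsup0 : Q (Function.support fun ω => err ω - (V * M) ^ 2 / n)ᶜ = 0 := by
        have hne : ∀ᵐ ω ∂Q, (fun ω => err ω - (V * M) ^ 2 / n) ω ≠ 0 :=
          hstrict.mono fun ω h => ne_of_gt h
        rw [ae_iff] at hne
        have hset : (Function.support fun ω => err ω - (V * M) ^ 2 / n)ᶜ =
            {ω | ¬ ((fun ω => err ω - (V * M) ^ 2 / n) ω ≠ 0)} := by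
          ext ω; simp [Function.mem_support]
        rw [hset]
        exact hne
      have hsupp_pos : 0 < Q (Function.support fun ω => err ω - (V * M) ^ 2 / n) := by
        by_contra hz
        push_neg at hz
        have hz0 : Q (Function.support fun ω => err ω - (V * M) ^ 2 / n) = 0 :=
          le_antisymm hz (by positivity)
        have hle : Q Set.univ ≤ Q (Function.support fun ω => err ω - (V * M) ^ 2 / n) +
            Q (Function.support fun ω => err ω - (V * M) ^ 2 / n)ᶜ := by
          calc Q Set.univ
              = Q ((Function.support fun ω => err ω - (V * M) ^ 2 / n) ∪
                (Function.support fun ω => err ω - (V * M) ^ 2 / n)ᶜ) := by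
                rw [Set.union_compl_self]
            _ ≤ _ := measure_union_le _ _
        rw [hz0, hsup0, add_zero, measure_univ] at hle
        simp at hle
      have hpos : 0 < ∫ ω, (err ω - (V * M) ^ 2 / n) ∂Q := by
        rw [integral_pos_iff_support_of_nonneg_ae (hstrict.mono fun ω h => le_of_lt h) hgint]
        exact hsupp_pos
      have hneg : ∫ ω, (err ω - (V * M) ^ 2 / n) ∂Q ≤ 0 := by
        rw [integral_sub herrint (integrable_const _), integral_const, probReal_univ]
        simp only [ENNReal.toReal_one, one_smul, smul_eq_mul]
        linarith [htotal]
      linarith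
    obtain ⟨ω, hωS, hωerr⟩ := hexists
    have hωS' : ∀ i, ‖(ω i).1.1‖ = 1 ∧ |(ω i).1.2| ≤ Real.sqrt d ∧ |(ω i).2| = 1 := by
      intro i
      have h := hωS i
      rw [hSdef] at h
      exact h
    refine ⟨fun i => (V / n) * (ω i).2, fun i => (ω i).1.1, fun i => (ω i).1.2,
      fun i => ⟨(hωS' i).1, (hωS' i).2.1⟩, ?_, ?_⟩
    · refine le_of_eq ?_
      have habs : ∀ i : Fin n, |(V / n) * (ω i).2| = V / n := by
        intro i
        rw [abs_mul, (hωS' i).2.2, mul_one, abs_of_nonneg (by positivity)]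
      calc ∑ i, |(V / n) * (ω i).2| = ∑ _i : Fin n, V / n :=
            Finset.sum_congr rfl fun i _ => habs i
        _ = n * (V / n) := by
            rw [Finset.sum_const, Finset.card_univ, Fintype.card_fin, nsmul_eq_mul]
        _ = V := by field_simp
    · have hnet : Set.EqOn
          (fun x => (f x - ∑ i, ((V / n) * (ω i).2) *
            (max 0 (⟪(ω i).1.1, x⟫ + (ω i).1.2)) ^ k) ^ 2)
          (fun x => F x ω) (unitCube d) := by
        intro x hx
        simp only [hFdef]
        congr 2
        rw [Finset.mul_sum]
        refine Finset.sum_congr rfl fun i _ => ?_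
        have hH : H (ω i) x = (ω i).2 * (max 0 (⟪(ω i).1.1, x⟫ + (ω i).1.2)) ^ k := by
          show VarAux.Hf k M (ω i) x = _
          rw [hMdef]
          exact VarAux.Hf_eq (ω i) (hωS' i).1 (hωS' i).2.1 (hωS' i).2.2 hx
        rw [hH]
        field_simp
      calc ∫ x in unitCube d, (f x - ∑ i, ((V / n) * (ω i).2) *
            (max 0 (⟪(ω i).1.1, x⟫ + (ω i).1.2)) ^ k) ^ 2
          = ∫ x in unitCube d, F x ω := setIntegral_congr_fun hΩm hnet
        _ = err ω := rfl
        _ ≤ (V * M) ^ 2 / n := hωerr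
        _ = 4 ^ k * (d:ℝ) ^ k * V ^ 2 / n := by
            have hsq : (2 * Real.sqrt d) ^ 2 = 4 * (d:ℝ) := by
              rw [mul_pow, Real.sq_sqrt (by positivity : (0:ℝ) ≤ (d:ℝ))]
              norm_num
            have h4 : M ^ 2 = 4 ^ k * (d:ℝ) ^ k := by
              rw [hMdef, pow_right_comm, hsq, mul_pow]
            rw [mul_pow, h4]
            ring
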